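/- Suppose additionally there is a linear functional deg on V such that deg(α) ∈ {−1, 0, 1} for every root α ∈ Δ, deg(α) ∈ {0, 1} for every positive root α ∈ Δ⁺, and every root of degree 0 has support contained in X := {α ∈ Π : deg α = 0}. Let Δ₀⁺ = {α ∈ Δ⁺ : deg α = 0}. Then a finite subset S ⊆ Δ⁺ is a slice with S ∩ Δ₀⁺ = ∅ (equivalently, S = I(w) for some X-reduced w ∈ W) if and only if the following two conditions hold: (1) S ∩ Δ₀⁺ = ∅, and (2) for every α ∈ S and every β ∈ Δ₀⁺ such that α − β ∈ Δ, one has α − β ∈ S. -/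

import Mathlib

/-!
A (possibly infinite) reduced crystallographic root system with a fixed system of simple
roots.  Since the simple roots `Π` are linearly independent and every root is a linear
combination of them, we may coordinatize: the span of `Π` is identified with the free
module `ι →₀ ℚ` on the index set `ι` of simple roots, the simple root indexed by `i`
being `Finsupp.single i 1`.  The coefficients `c_α` of an element `γ = ∑_{α ∈ Π} c_α α`
are then just the values `γ i`, and `supp γ` is `γ.support`.
-/

/-- A reduced crystallographic root system (possibly infinite) together with a chosen set
of simple roots, coordinatized in the basis of simple roots.  The field `coroot α` is the
linear functional `⟨·, α∨⟩` (its values are only constrained for `α ∈ Δ`). -/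
structure SimpleRootSystem (ι : Type*) where
  /-- The set of roots. -/
  Δ : Set (ι →₀ ℚ)
  /-- The coroot pairing `β ↦ ⟨β, α∨⟩`. -/
  coroot : (ι →₀ ℚ) → ((ι →₀ ℚ) →ₗ[ℚ] ℚ)
  /-- Roots are nonzero. -/
  zero_not_mem : (0 : ι →₀ ℚ) ∉ Δ
  /-- `⟨α, α∨⟩ = 2`. -/
  pairing_self : ∀ α ∈ Δ, coroot α α = 2
  /-- Crystallographic: `⟨β, α∨⟩ ∈ ℤ`. -/
  pairing_int : ∀ α ∈ Δ, ∀ β ∈ Δ, ∃ n : ℤ, coroot α β = (n : ℚ)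
  /-- The reflection `s_α(β) = β - ⟨β, α∨⟩ α` maps roots to roots. -/
  reflect_mem : ∀ α ∈ Δ, ∀ β ∈ Δ, β - coroot α β • α ∈ Δ
  /-- Reduced: the only multiples of a root `α` that are roots are `±α`. -/
  reduced : ∀ α ∈ Δ, ∀ c : ℚ, c • α ∈ Δ → c = 1 ∨ c = -1
  /-- Every simple root is a root. -/
  simple_mem : ∀ i : ι, (Finsupp.single i 1 : ι →₀ ℚ) ∈ Δ
  /-- Every root is a linear combination of the simple roots whose coefficients are either
  all nonnegative integers or all nonpositive integers. -/
  coeff_sign : ∀ α ∈ Δ, (∀ i, ∃ n : ℕ, α i = (n : ℚ)) ∨ (∀ i, ∃ n : ℕ, α i = -(n : ℚ))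

namespace SimpleRootSystem

variable {ι : Type*}

/-- The simple root indexed by `i`. -/
noncomputable def simple (i : ι) : ι →₀ ℚ := Finsupp.single i 1

variable (R : SimpleRootSystem ι)

/-- The positive roots `Δ⁺`. -/
def posRoots : Set (ι →₀ ℚ) := {α ∈ R.Δ | ∀ i, 0 ≤ α i}

/-- The negative roots `Δ⁻`. -/
def negRoots : Set (ι →₀ ℚ) := {α ∈ R.Δ | ∀ i, α i ≤ 0}

/-- The reflection `s_α : v ↦ v - ⟨v, α∨⟩ α`, as a linear endomorphism. -/
noncomputable def reflection (α : ι →₀ ℚ) : Module.End ℚ (ι →₀ ℚ) :=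
  LinearMap.id - (R.coroot α).smulRight α

/-- The Weyl group `W`, the group generated by the simple reflections, realized as the
closure of the set of simple reflections inside the endomorphism monoid (each simple
reflection is an involution, so this closure is closed under inverses). -/
noncomputable def weylGroup : Submonoid (Module.End ℚ (ι →₀ ℚ)) :=
  Submonoid.closure {g | ∃ i : ι, g = R.reflection (simple i)}

/-- The length `l(w)`: the least `k` such that `w` is a product of `k` simple
reflections. -/
noncomputable def length (w : Module.End ℚ (ι →₀ ℚ)) : ℕ :=
  sInf {k | ∃ f : Fin k → ι,
    w = (List.ofFn fun j => R.reflection (simple (f j))).prod}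

/-- The inversion set `I(w) = Δ⁺ ∩ w(Δ⁻)`. -/
noncomputable def inversions (w : Module.End ℚ (ι →₀ ℚ)) : Set (ι →₀ ℚ) :=
  R.posRoots ∩ (⇑w '' R.negRoots)

/-- The Dynkin diagram: the graph on the (indices of the) simple roots in which two
distinct simple roots `α ≠ β` are adjacent iff `⟨α, β∨⟩ ≠ 0` (equivalently, in a root
system, `⟨β, α∨⟩ ≠ 0`; we state the symmetrized form). -/
noncomputable def dynkin : SimpleGraph ι where
  Adj i j := i ≠ j ∧
    (R.coroot (simple j) (simple i) ≠ 0 ∨ R.coroot (simple i) (simple j) ≠ 0)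
  symm := ⟨fun _ _ h => ⟨h.1.symm, h.2.symm⟩⟩
  loopless := ⟨fun _ h => h.1 rfl⟩

end SimpleRootSystem

namespace SimpleRootSystem

variable {ι : Type*} (R : SimpleRootSystem ι)

/-- For `X ⊆ Π`, the set `Δ(X)` of roots whose support is contained in `X`. -/
def deltaX (X : Set ι) : Set (ι →₀ ℚ) := {γ ∈ R.Δ | ↑γ.support ⊆ X}

/-- `w` is `X`-reduced if its inversion set contains no root supported in `X`. -/
noncomputable def IsXReduced (X : Set ι) (w : Module.End ℚ (ι →₀ ℚ)) : Prop :=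
  R.inversions w ∩ R.deltaX X = ∅

/-- `Y^(j)`: the set of simple roots at (extended) graph distance less than `j` from
`Y = Π \ X` in the Dynkin diagram. -/
noncomputable def yNbhd (X : Set ι) (j : ℕ) : Set ι :=
  {i | ∃ y, y ∉ X ∧ R.dynkin.edist i y < (j : ℕ∞)}

/-- The subgroup (realized as a submonoid of the endomorphism monoid, as in `weylGroup`)
generated by the simple reflections `s_α` for `α` in a set `s` of simple roots. -/
noncomputable def standardParabolic (s : Set ι) : Submonoid (Module.End ℚ (ι →₀ ℚ)) :=
  Submonoid.closure {g | ∃ i ∈ s, g = R.reflection (simple i)}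

end SimpleRootSystem

namespace SimpleRootSystem

variable {ι : Type*} (R : SimpleRootSystem ι)

/-- A finite set `S ⊆ Δ⁺` of positive roots is a *slice* if `S ∪ (Δ⁻ \ (-S))` is closed
under addition (whenever the sum of two of its elements is a root, the sum belongs to
it). -/
def IsSlice (S : Set (ι →₀ ℚ)) : Prop :=
  ∀ α ∈ S ∪ (R.negRoots \ (-S)), ∀ β ∈ S ∪ (R.negRoots \ (-S)),
    α + β ∈ R.Δ → α + β ∈ S ∪ (R.negRoots \ (-S))

/-!
Once `S` lies in degree `1`, closure of `S ∪ (Δ⁻ ∖ -S)` under addition reduces to condition (2),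
because every root has degree `-1`, `0` or `1`. For the converse realization, remove from `S` an
element `β` of maximal height: by induction `S ∖ {β} = I(w)`, and it suffices that `w⁻¹ β` is a
simple root `αⱼ`, since then `S = I(w sⱼ)`. Otherwise `w⁻¹ β` is not simple, and one of two things
happens. Either `w⁻¹ β - αᵢ` is a positive root for some `i`, which is impossible since `S` is
co-closed and the `w`-images of roots have degree at most `1`; or `w⁻¹ β` and `αᵢ` pair to `2`
with each other, and the resulting affine `A₁`-ladder `(2n+1)αᵢ - 2n w⁻¹β` consists of negative
roots whose `w`-images are the infinitely many elements `(2n+1)wαᵢ - 2nβ` of `S`.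
-/

section Roots

variable {α β : ι →₀ ℚ}

lemma neg_mem (h : α ∈ R.Δ) : -α ∈ R.Δ := by
  simpa [R.pairing_self α h, two_smul] using R.reflect_mem α h α h

lemma mem_posRoots_or_mem_negRoots (h : α ∈ R.Δ) : α ∈ R.posRoots ∨ α ∈ R.negRoots := by
  rcases R.coeff_sign α h with hc | hc
  · exact Or.inl ⟨h, fun i => by obtain ⟨n, hn⟩ := hc i; simp [hn]⟩
  · exact Or.inr ⟨h, fun i => by obtain ⟨n, hn⟩ := hc i; simp [hn]⟩

lemma notMem_negRoots_of_mem_posRoots (hp : α ∈ R.posRoots) : α ∉ R.negRoots := by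
  intro hn
  have : α = 0 := Finsupp.ext fun i => le_antisymm (hn.2 i) (hp.2 i)
  exact R.zero_not_mem (this ▸ hp.1)

lemma mem_posRoots_of_apply_pos (h : α ∈ R.Δ) {i : ι} (hi : 0 < α i) : α ∈ R.posRoots :=
  (R.mem_posRoots_or_mem_negRoots h).resolve_right fun hn => (hn.2 i).not_gt hi

lemma mem_negRoots_of_apply_neg (h : α ∈ R.Δ) {i : ι} (hi : α i < 0) : α ∈ R.negRoots :=
  (R.mem_posRoots_or_mem_negRoots h).resolve_left fun hp => (hp.2 i).not_gt hi

lemma neg_mem_posRoots (h : α ∈ R.negRoots) : -α ∈ R.posRoots :=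
  ⟨R.neg_mem h.1, fun i => by simpa using h.2 i⟩

lemma neg_mem_negRoots (h : α ∈ R.posRoots) : -α ∈ R.negRoots :=
  ⟨R.neg_mem h.1, fun i => by simpa using h.2 i⟩

lemma simple_mem_posRoots (i : ι) : simple i ∈ R.posRoots :=
  ⟨R.simple_mem i, Finsupp.single_nonneg.2 zero_le_one⟩

lemma degree_pos_of_mem_posRoots (h : α ∈ R.posRoots) : 0 < α.degree := by
  obtain ⟨i, hi⟩ := Finsupp.support_nonempty_iff.2 fun h0 => R.zero_not_mem (h0 ▸ h.1)
  exact Finset.sum_pos' (fun j _ => h.2 j)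
    ⟨i, hi, lt_of_le_of_ne (h.2 i) (Ne.symm (Finsupp.mem_support_iff.1 hi))⟩

lemma exists_ne_apply_ne_zero (hα : α ∈ R.Δ) {j : ι} (h₁ : α ≠ simple j) (h₂ : α ≠ -simple j) :
    ∃ l ≠ j, α l ≠ 0 := by
  by_contra! h
  have hα' : α = α j • simple j := by
    ext l
    by_cases hl : l = j
    · subst hl; simp [simple]
    · simp [simple, Ne.symm hl, h l hl]
  rcases R.reduced (simple j) (R.simple_mem j) (α j) (by rw [← hα']; exact hα) with h1 | h1
  · exact h₁ (by rw [hα', h1, one_smul])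
  · exact h₂ (by rw [hα', h1, neg_one_smul])

lemma map_eq_sum (F : (ι →₀ ℚ) →ₗ[ℚ] ℚ) (γ : ι →₀ ℚ) :
    F γ = ∑ i ∈ γ.support, γ i * F (simple i) := by
  conv_lhs => rw [← Finsupp.sum_single γ]
  rw [map_finsuppSum, Finsupp.sum]
  refine Finset.sum_congr rfl fun i _ => ?_
  rw [simple, ← smul_eq_mul, ← map_smul, Finsupp.smul_single_one]

lemma exists_coroot_simple_pos {γ : ι →₀ ℚ} (hγ : γ ∈ R.posRoots) :
    ∃ i, 0 < R.coroot γ (simple i) := by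
  by_contra! h
  have : R.coroot γ γ ≤ 0 := by
    rw [map_eq_sum]
    exact Finset.sum_nonpos fun i _ => mul_nonpos_of_nonneg_of_nonpos (hγ.2 i) (h i)
  linarith [R.pairing_self γ hγ.1]

end Roots

section Weyl

variable {α β : ι →₀ ℚ} {w : Module.End ℚ (ι →₀ ℚ)}

lemma reflection_apply (α v : ι →₀ ℚ) : R.reflection α v = v - R.coroot α v • α := rfl

lemma reflection_simple_mem_weylGroup (i : ι) : R.reflection (simple i) ∈ R.weylGroup :=
  Submonoid.subset_closure ⟨i, rfl⟩

lemma reflection_simple_mem (i : ι) (h : α ∈ R.Δ) : R.reflection (simple i) α ∈ R.Δ :=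
  R.reflect_mem _ (R.simple_mem i) α h

lemma coroot_simple_self (i : ι) : R.coroot (simple i) (simple i) = 2 :=
  R.pairing_self _ (R.simple_mem i)

lemma reflection_simple_involutive (i : ι) : Function.Involutive (R.reflection (simple i)) := by
  intro v
  rw [reflection_apply, reflection_apply, map_sub, map_smul, coroot_simple_self]
  module

lemma reflection_simple_neg_simple (j : ι) : R.reflection (simple j) (-simple j) = simple j := by
  rw [reflection_apply, map_neg, coroot_simple_self]
  module

lemma reflection_simple_mem_negRoots {j : ι} (hβ : β ∈ R.negRoots) (hne : β ≠ -simple j) :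
    R.reflection (simple j) β ∈ R.negRoots := by
  obtain ⟨l, hlj, hl⟩ := R.exists_ne_apply_ne_zero hβ.1
    (fun h => R.notMem_negRoots_of_mem_posRoots (R.simple_mem_posRoots j) (h ▸ hβ)) hne
  refine R.mem_negRoots_of_apply_neg (R.reflection_simple_mem j hβ.1) (i := l) ?_
  simpa [reflection_apply, simple, Ne.symm hlj] using lt_of_le_of_ne (hβ.2 l) hl

lemma exists_inverse_of_mem_weylGroup (hw : w ∈ R.weylGroup) :
    ∃ w' ∈ R.weylGroup, Function.LeftInverse w' w ∧ Function.RightInverse w' w := by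
  induction hw using Submonoid.closure_induction with
  | mem x hx =>
    obtain ⟨i, rfl⟩ := hx
    exact ⟨_, R.reflection_simple_mem_weylGroup i, (R.reflection_simple_involutive i).leftInverse,
      (R.reflection_simple_involutive i).rightInverse⟩
  | one => exact ⟨1, one_mem _, fun _ => rfl, fun _ => rfl⟩
  | mul x y _ _ hx hy =>
    obtain ⟨x', hx'W, hxl, hxr⟩ := hx
    obtain ⟨y', hy'W, hyl, hyr⟩ := hy
    refine ⟨y' * x', mul_mem hy'W hx'W, ?_, ?_⟩ <;> simp only [Module.End.coe_mul]
    · exact hxl.comp hyl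
    · exact hxr.comp hyr

lemma apply_mem_of_mem_weylGroup (hw : w ∈ R.weylGroup) (hα : α ∈ R.Δ) : w α ∈ R.Δ := by
  induction hw using Submonoid.closure_induction generalizing α with
  | mem x hx =>
    obtain ⟨i, rfl⟩ := hx
    exact R.reflection_simple_mem i hα
  | one => exact hα
  | mul x y _ _ hx hy => exact hx (hy hα)

lemma inversions_one : R.inversions 1 = ∅ :=
  Set.eq_empty_iff_forall_notMem.2 fun _ ⟨hp, _, hζ, e⟩ =>
    R.notMem_negRoots_of_mem_posRoots hp (e ▸ hζ)

lemma mem_inversions_iff {w' : Module.End ℚ (ι →₀ ℚ)} (hl : Function.LeftInverse w' w)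
    (hr : Function.RightInverse w' w) :
    α ∈ R.inversions w ↔ α ∈ R.posRoots ∧ w' α ∈ R.negRoots := by
  refine and_congr_right fun _ => ⟨?_, fun h => ⟨_, h, hr α⟩⟩
  rintro ⟨ζ, hζ, rfl⟩
  rwa [hl ζ]

lemma apply_mem_inversions_iff (hw : Function.Injective w) :
    w α ∈ R.inversions w ↔ w α ∈ R.posRoots ∧ α ∈ R.negRoots :=
  and_congr_right fun _ => hw.mem_set_image

lemma inversions_mul_reflection_simple {j : ι} (hj : w (simple j) ∈ R.posRoots) :
    R.inversions (w * R.reflection (simple j)) = insert (w (simple j)) (R.inversions w) := by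
  ext β
  simp only [inversions, Set.mem_insert_iff, Set.mem_inter_iff, Set.mem_image,
    Module.End.mul_apply]
  constructor
  · rintro ⟨hβ, ζ, hζ, rfl⟩
    by_cases hζj : ζ = -simple j
    · rw [hζj, reflection_simple_neg_simple]
      exact Or.inl rfl
    · exact Or.inr ⟨hβ, _, R.reflection_simple_mem_negRoots hζ hζj, rfl⟩
  · rintro (rfl | ⟨hβ, ζ, hζ, rfl⟩)
    · exact ⟨hj, _, R.neg_mem_negRoots (R.simple_mem_posRoots j),
        by rw [reflection_simple_neg_simple]⟩
    · refine ⟨hβ, _, R.reflection_simple_mem_negRoots hζ ?_,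
        by rw [R.reflection_simple_involutive]⟩
      rintro rfl
      exact R.notMem_negRoots_of_mem_posRoots hβ (by rw [map_neg]; exact R.neg_mem_negRoots hj)

end Weyl

variable {R} in
lemma IsSlice.mem_or_mem_of_add_mem {S : Set (ι →₀ ℚ)} (hS : R.IsSlice S) {p q : ι →₀ ℚ}
    (hp : p ∈ R.posRoots) (hq : q ∈ R.posRoots) (hpq : p + q ∈ S) : p ∈ S ∨ q ∈ S := by
  refine or_iff_not_imp_right.2 fun hqS => ?_
  have := hS _ (Or.inl hpq) (-q) (Or.inr ⟨R.neg_mem_negRoots hq, by simpa using hqS⟩)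
    (by simpa using hp.1)
  rw [add_neg_cancel_right] at this
  exact this.resolve_right fun h => R.notMem_negRoots_of_mem_posRoots hp h.1

section RankTwo

variable {γ : ι →₀ ℚ}

lemma smul_sub_smul_mem_of_coroot_eq_two {a b : ι →₀ ℚ} (ha : a ∈ R.Δ) (hb : b ∈ R.Δ)
    (hab : R.coroot b a = 2) (hba : R.coroot a b = 2) (n : ℕ) :
    (2 * n + 1 : ℚ) • a - (2 * n : ℚ) • b ∈ R.Δ := by
  induction n with
  | zero => simpa using ha
  | succ n ih =>
    have h₁ := R.reflect_mem b hb _ ih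
    have hu : R.coroot b ((2 * n + 1 : ℚ) • a - (2 * n : ℚ) • b) = 2 := by
      simp only [map_sub, map_smul, hab, R.pairing_self b hb, smul_eq_mul]; ring
    rw [hu] at h₁
    have h₂ := R.reflect_mem a ha _ h₁
    have hv : R.coroot a ((2 * n + 1 : ℚ) • a - (2 * n : ℚ) • b - (2 : ℚ) • b) = -2 := by
      simp only [map_sub, map_smul, hba, R.pairing_self a ha, smul_eq_mul]; ring
    rw [hv] at h₂
    convert h₂ using 1
    push_cast
    module

lemma setOf_negRoots_infinite_of_coroot_eq_two (φ : (ι →₀ ℚ) →ₗ[ℚ] ℚ) (hγ : γ ∈ R.Δ)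
    {i l : ι} (hli : l ≠ i) (hγl : 0 < γ l) (hφγ : φ γ = 1) (hφi : φ (simple i) = 1)
    (hk : R.coroot γ (simple i) = 2) (hm : R.coroot (simple i) γ = 2) :
    {x ∈ R.negRoots | φ x = 1}.Infinite := by
  have hcoord : ∀ n : ℕ, ((2 * n + 1 : ℚ) • simple i - (2 * n : ℚ) • γ) l = -(2 * n * γ l) := by
    intro n
    simp [simple, Ne.symm hli]
  refine Set.infinite_of_injective_forall_mem
    (f := fun n : ℕ => (2 * (n + 1 : ℕ) + 1 : ℚ) • simple i - (2 * (n + 1 : ℕ) : ℚ) • γ)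
    (fun n n' h => ?_) (fun n => ⟨?_, ?_⟩)
  · have := congrArg (· l) h
    simp only [hcoord, neg_inj, mul_left_inj' hγl.ne'] at this
    simpa using this
  · refine R.mem_negRoots_of_apply_neg
      (R.smul_sub_smul_mem_of_coroot_eq_two (R.simple_mem i) hγ hk hm _) (i := l) ?_
    rw [hcoord]
    exact neg_neg_of_pos (mul_pos (by positivity) hγl)
  · simp only [map_sub, map_smul, hφγ, hφi, smul_eq_mul]
    ring

lemma exists_sub_simple_mem_posRoots (φ : (ι →₀ ℚ) →ₗ[ℚ] ℚ) (hφ : ∀ x ∈ R.Δ, |φ x| ≤ 1)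
    (hfin : {x ∈ R.negRoots | φ x = 1}.Finite) (hγ : γ ∈ R.posRoots) (hφγ : φ γ = 1)
    (hsimple : ∀ j, γ ≠ simple j) : ∃ i, γ - simple i ∈ R.posRoots := by
  obtain ⟨i, hi⟩ := R.exists_coroot_simple_pos hγ
  obtain ⟨l, hli, hl⟩ := R.exists_ne_apply_ne_zero hγ.1 (hsimple i) fun h =>
    R.notMem_negRoots_of_mem_posRoots hγ (h ▸ R.neg_mem_negRoots (R.simple_mem_posRoots i))
  have hγl : 0 < γ l := lt_of_le_of_ne (hγ.2 l) (Ne.symm hl)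
  refine ⟨i, R.mem_posRoots_of_apply_pos ?_ (i := l) (by simpa [simple, Ne.symm hli] using hγl)⟩
  obtain ⟨k, hk⟩ := R.pairing_int γ hγ.1 (simple i) (R.simple_mem i)
  obtain ⟨m, hm⟩ := R.pairing_int (simple i) (R.simple_mem i) γ hγ.1
  -- `φ (sᵧ αᵢ) = φ αᵢ - k` forces `k ∈ {1, 2}`;
  -- for `k = 2`, `φ (sᵢ sᵧ αᵢ) = 2m - 3` forces `m ∈ {1, 2}`
  have h₁ := R.reflect_mem γ hγ.1 (simple i) (R.simple_mem i)
  rw [hk] at h₁ hi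
  have hφ₁ := abs_le.1 (hφ _ h₁)
  have hφi := abs_le.1 (hφ (simple i) (R.simple_mem i))
  simp only [map_sub, map_smul, hφγ, smul_eq_mul, mul_one] at hφ₁
  have hk12 : k = 1 ∨ k = 2 := by
    have : (0 : ℚ) < k ∧ (k : ℚ) ≤ 2 := ⟨hi, by linarith⟩
    have : 0 < k ∧ k ≤ 2 := by exact_mod_cast this
    omega
  obtain rfl | rfl := hk12
  · simpa [neg_sub] using R.neg_mem h₁
  have h₂ := R.reflect_mem (simple i) (R.simple_mem i) _ h₁
  simp only [map_sub, map_smul, coroot_simple_self, hm, smul_eq_mul] at h₂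
  have hφ₂ := abs_le.1 (hφ _ h₂)
  have hφi1 : φ (simple i) = 1 := by push_cast at hφ₁; linarith
  simp only [map_sub, map_smul, hφγ, hφi1, smul_eq_mul] at hφ₂
  have hm12 : m = 1 ∨ m = 2 := by
    have : (1 : ℚ) ≤ m ∧ (m : ℚ) ≤ 2 := by push_cast at hφ₂; constructor <;> linarith
    have : 1 ≤ m ∧ m ≤ 2 := by exact_mod_cast this
    omega
  obtain rfl | rfl := hm12
  · simpa [hm] using R.reflect_mem (simple i) (R.simple_mem i) γ hγ.1
  · exact absurd hfin (R.setOf_negRoots_infinite_of_coroot_eq_two φ hγ.1 hli hγl hφγ hφi1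
      (by exact_mod_cast hk) (by exact_mod_cast hm))

end RankTwo

def posRootsDegZero (deg : (ι →₀ ℚ) →ₗ[ℚ] ℚ) : Set (ι →₀ ℚ) := {α ∈ R.posRoots | deg α = 0}

def IsClosedUnderSubDegZero (deg : (ι →₀ ℚ) →ₗ[ℚ] ℚ) (S : Set (ι →₀ ℚ)) : Prop :=
  ∀ α ∈ S, ∀ β ∈ R.posRootsDegZero deg, α - β ∈ R.Δ → α - β ∈ S

section Degree

variable {deg : (ι →₀ ℚ) →ₗ[ℚ] ℚ} {S : Set (ι →₀ ℚ)} {α β : ι →₀ ℚ}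
  {w : Module.End ℚ (ι →₀ ℚ)}

lemma deg_eq_zero_or_neg_one (hdegpos : ∀ α ∈ R.posRoots, deg α = 0 ∨ deg α = 1)
    (h : α ∈ R.negRoots) : deg α = 0 ∨ deg α = -1 := by
  have := hdegpos _ (R.neg_mem_posRoots h)
  rw [map_neg] at this
  rcases this with h | h
  · exact Or.inl (by linarith)
  · exact Or.inr (by linarith)

lemma abs_deg_le_one (hdegpos : ∀ α ∈ R.posRoots, deg α = 0 ∨ deg α = 1) (h : α ∈ R.Δ) :
    |deg α| ≤ 1 := by
  rcases R.mem_posRoots_or_mem_negRoots h with h | h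
  · rcases hdegpos α h with h | h <;> simp [h]
  · rcases R.deg_eq_zero_or_neg_one hdegpos h with h | h <;> simp [h]

lemma mem_posRoots_of_deg_pos (hdegpos : ∀ α ∈ R.posRoots, deg α = 0 ∨ deg α = 1)
    (h : α ∈ R.Δ) (hα : 0 < deg α) : α ∈ R.posRoots :=
  (R.mem_posRoots_or_mem_negRoots h).resolve_right fun hn => by
    rcases R.deg_eq_zero_or_neg_one hdegpos hn with h | h <;> linarith

lemma deg_eq_one_of_inter_eq_empty (hdegpos : ∀ α ∈ R.posRoots, deg α = 0 ∨ deg α = 1)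
    (hpos : S ⊆ R.posRoots) (h0 : S ∩ R.posRootsDegZero deg = ∅) : ∀ α ∈ S, deg α = 1 :=
  fun α hα => (hdegpos α (hpos hα)).resolve_left fun h =>
    Set.notMem_empty α (h0.subset ⟨hα, hpos hα, h⟩)

lemma add_mem_of_mem_of_mem_negRoots (hdegpos : ∀ α ∈ R.posRoots, deg α = 0 ∨ deg α = 1)
    (hS : ∀ α ∈ S, deg α = 1) (hc : R.IsClosedUnderSubDegZero deg S) (hα : α ∈ S)
    (hβ : β ∈ R.negRoots \ -S) (hαβ : α + β ∈ R.Δ) : α + β ∈ S ∪ (R.negRoots \ -S) := by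
  rcases R.deg_eq_zero_or_neg_one hdegpos hβ.1 with hβ0 | hβ1
  · have := hc α hα (-β) ⟨R.neg_mem_posRoots hβ.1, by simp [hβ0]⟩ (by simpa using hαβ)
    exact Or.inl (by simpa using this)
  have hαβ0 : deg (α + β) = 0 := by simp [hS α hα, hβ1]
  rcases R.mem_posRoots_or_mem_negRoots hαβ with hp | hn
  · have := hc α hα (α + β) ⟨hp, hαβ0⟩ (by simpa using R.neg_mem hβ.1.1)
    exact absurd (by simpa using this) hβ.2
  · refine Or.inr ⟨hn, fun h => ?_⟩
    have := hS _ (Set.mem_neg.1 h)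
    rw [map_neg, hαβ0] at this
    norm_num at this

lemma neg_add_notMem_of_deg_eq_zero (hc : R.IsClosedUnderSubDegZero deg S)
    (hα : α ∈ R.negRoots) (hα0 : deg α = 0) (hβ : β ∈ R.negRoots \ -S) : -(α + β) ∉ S := by
  intro h
  have := hc _ h (-α) ⟨R.neg_mem_posRoots hα, by simp [hα0]⟩ (by simpa using R.neg_mem hβ.1.1)
  exact hβ.2 (Set.mem_neg.2 (by simpa using this))

lemma isSlice_of_isClosedUnderSubDegZero (hdegpos : ∀ α ∈ R.posRoots, deg α = 0 ∨ deg α = 1)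
    (hS : ∀ α ∈ S, deg α = 1) (hc : R.IsClosedUnderSubDegZero deg S) : R.IsSlice S := by
  intro α hα β hβ hαβ
  rcases hα with hα | hα <;> rcases hβ with hβ | hβ
  · have := abs_le.1 (R.abs_deg_le_one hdegpos hαβ)
    simp only [map_add, hS α hα, hS β hβ] at this
    linarith
  · exact R.add_mem_of_mem_of_mem_negRoots hdegpos hS hc hα hβ hαβ
  · rw [add_comm] at hαβ ⊢
    exact R.add_mem_of_mem_of_mem_negRoots hdegpos hS hc hβ hα hαβ
  · refine Or.inr ⟨⟨hαβ, fun i => add_nonpos (hα.1.2 i) (hβ.1.2 i)⟩, fun h => ?_⟩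
    have hαβ1 := hS _ (Set.mem_neg.1 h)
    rcases R.deg_eq_zero_or_neg_one hdegpos hα.1 with hα0 | hα1
    · exact R.neg_add_notMem_of_deg_eq_zero hc hα.1 hα0 hβ (Set.mem_neg.1 h)
    rcases R.deg_eq_zero_or_neg_one hdegpos hβ.1 with hβ0 | hβ1
    · rw [add_comm] at h
      exact R.neg_add_notMem_of_deg_eq_zero hc hβ.1 hβ0 hα (Set.mem_neg.1 h)
    · simp [hα1, hβ1] at hαβ1

lemma isClosedUnderSubDegZero_of_isSlice (hdegpos : ∀ α ∈ R.posRoots, deg α = 0 ∨ deg α = 1)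
    (hS : ∀ α ∈ S, deg α = 1) (hslice : R.IsSlice S) : R.IsClosedUnderSubDegZero deg S := by
  intro α hα β hβ hαβ
  have hβS : -β ∈ R.negRoots \ -S := ⟨R.neg_mem_negRoots hβ.1, fun h => by
    have := hS _ (Set.mem_neg.1 h)
    simp [hβ.2] at this⟩
  have := hslice α (Or.inl hα) (-β) (Or.inr hβS) (by rwa [← sub_eq_add_neg])
  rw [← sub_eq_add_neg] at this
  refine this.resolve_right fun h => R.notMem_negRoots_of_mem_posRoots ?_ h.1
  exact R.mem_posRoots_of_deg_pos hdegpos hαβ (by simp [hS α hα, hβ.2])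

lemma inter_eq_empty_of_isXReduced
    (hdeg0 : ∀ α ∈ R.Δ, deg α = 0 → ↑α.support ⊆ {i : ι | deg (simple i) = 0})
    (hX : R.IsXReduced {i : ι | deg (simple i) = 0} w) :
    R.inversions w ∩ R.posRootsDegZero deg = ∅ :=
  Set.eq_empty_iff_forall_notMem.2 fun β ⟨hβI, hβ⟩ =>
    Set.notMem_empty β (hX.subset ⟨hβI, hβ.1.1, hdeg0 β hβ.1.1 hβ.2⟩)

lemma isXReduced_of_inter_eq_empty (h : R.inversions w ∩ R.posRootsDegZero deg = ∅) :
    R.IsXReduced {i : ι | deg (simple i) = 0} w := by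
  refine Set.eq_empty_iff_forall_notMem.2 fun α ⟨hαI, _, hsupp⟩ =>
    Set.notMem_empty α (h.subset ⟨hαI, hαI.1, ?_⟩)
  rw [map_eq_sum]
  exact Finset.sum_eq_zero fun i hi => by
    simp only [show deg (simple i) = 0 from hsupp hi, mul_zero]

lemma isClosedUnderSubDegZero_inversions (hdegpos : ∀ α ∈ R.posRoots, deg α = 0 ∨ deg α = 1)
    (hdeg0 : ∀ α ∈ R.Δ, deg α = 0 → ↑α.support ⊆ {i : ι | deg (simple i) = 0})
    (hw : w ∈ R.weylGroup) (hX : R.IsXReduced {i : ι | deg (simple i) = 0} w) :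
    R.IsClosedUnderSubDegZero deg (R.inversions w) := by
  obtain ⟨w', hw', hl, hr⟩ := R.exists_inverse_of_mem_weylGroup hw
  have h0 := R.inter_eq_empty_of_isXReduced hdeg0 hX
  intro α hα β hβ hαβ
  have hαβ1 : deg (α - β) = 1 := by
    simp [R.deg_eq_one_of_inter_eq_empty hdegpos (fun _ h => h.1) h0 α hα, hβ.2]
  have hβ' : w' β ∈ R.posRoots :=
    (R.mem_posRoots_or_mem_negRoots (R.apply_mem_of_mem_weylGroup hw' hβ.1.1)).resolve_right
      fun h => Set.notMem_empty β (h0.subset ⟨(R.mem_inversions_iff hl hr).2 ⟨hβ.1, h⟩, hβ⟩)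
  rw [R.mem_inversions_iff hl hr] at hα ⊢
  refine ⟨R.mem_posRoots_of_deg_pos hdegpos hαβ (by rw [hαβ1]; norm_num),
    R.apply_mem_of_mem_weylGroup hw' hαβ, fun i => ?_⟩
  simpa using sub_nonpos_of_le ((hα.2.2 i).trans (hβ'.2 i))

end Degree

section Realization

variable {deg : (ι →₀ ℚ) →ₗ[ℚ] ℚ} {w : Module.End ℚ (ι →₀ ℚ)} {β : ι →₀ ℚ}

lemma apply_add_ne_of_isSlice_insert (hdegpos : ∀ α ∈ R.posRoots, deg α = 0 ∨ deg α = 1)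
    (hw : w ∈ R.weylGroup) (hslice : R.IsSlice (insert β (R.inversions w)))
    (hS : ∀ α ∈ insert β (R.inversions w), deg α = 1) {p q : ι →₀ ℚ}
    (hp : p ∈ R.posRoots) (hq : q ∈ R.posRoots) : w (p + q) ≠ β := by
  obtain ⟨w', -, hl, -⟩ := R.exists_inverse_of_mem_weylGroup hw
  have key : ∀ p q, p ∈ R.posRoots → q ∈ R.posRoots → w (p + q) = β →
      w p ∈ R.posRoots ∧ w p ∉ insert β (R.inversions w) := by
    intro p q hp hq hpq
    have hwp : w p ∈ R.posRoots := by
      refine (R.mem_posRoots_or_mem_negRoots (R.apply_mem_of_mem_weylGroup hw hp.1)).resolve_right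
        fun h => ?_
      have h₁ := hS _ (Or.inr ⟨R.neg_mem_posRoots h, -p, R.neg_mem_negRoots hp, map_neg w p⟩)
      have h₂ := abs_le.1 (R.abs_deg_le_one hdegpos (R.apply_mem_of_mem_weylGroup hw hq.1))
      have h₃ := hS β (Set.mem_insert _ _)
      rw [← hpq, map_add, map_add] at h₃
      rw [map_neg] at h₁
      linarith
    refine ⟨hwp, ?_⟩
    rintro (h | h)
    · rw [← hpq, map_add, left_eq_add, ← map_zero w] at h
      exact R.zero_not_mem (hl.injective h ▸ hq.1)
    · exact R.notMem_negRoots_of_mem_posRoots hp ((R.apply_mem_inversions_iff hl.injective).1 h).2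
  intro hpq
  have hqp : w (q + p) = β := by rwa [add_comm]
  have hβ : w p + w q ∈ insert β (R.inversions w) := by
    rw [← map_add, hpq]
    exact Set.mem_insert _ _
  rcases hslice.mem_or_mem_of_add_mem (key p q hp hq hpq).1 (key q p hq hp hqp).1 hβ with h | h
  · exact (key p q hp hq hpq).2 h
  · exact (key q p hq hp hqp).2 h

lemma exists_apply_simple_eq_of_isSlice_insert
    (hdegpos : ∀ α ∈ R.posRoots, deg α = 0 ∨ deg α = 1) (hw : w ∈ R.weylGroup)
    (hβ : β ∉ R.inversions w) (hβpos : β ∈ R.posRoots) (hfin : (R.inversions w).Finite)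
    (hS : ∀ α ∈ insert β (R.inversions w), deg α = 1)
    (hslice : R.IsSlice (insert β (R.inversions w))) : ∃ j, w (simple j) = β := by
  obtain ⟨w', hw', hl, hr⟩ := R.exists_inverse_of_mem_weylGroup hw
  have hγ : w' β ∈ R.posRoots :=
    (R.mem_posRoots_or_mem_negRoots (R.apply_mem_of_mem_weylGroup hw' hβpos.1)).resolve_right
      fun h => hβ ((R.mem_inversions_iff hl hr).2 ⟨hβpos, h⟩)
  by_contra! hne
  have hfinφ : {x ∈ R.negRoots | (deg ∘ₗ w) x = 1}.Finite := by
    refine (hfin.preimage hl.injective.injOn).subset fun x ⟨hx, hx1⟩ =>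
      (R.apply_mem_inversions_iff hl.injective).2 ⟨?_, hx⟩
    exact R.mem_posRoots_of_deg_pos hdegpos (R.apply_mem_of_mem_weylGroup hw hx.1)
      (by simp only [LinearMap.comp_apply] at hx1; rw [hx1]; norm_num)
  obtain ⟨i, hi⟩ := R.exists_sub_simple_mem_posRoots (deg ∘ₗ w)
    (fun x hx => R.abs_deg_le_one (deg := deg) hdegpos (R.apply_mem_of_mem_weylGroup hw hx))
    hfinφ hγ
    (by rw [LinearMap.comp_apply, hr β, hS β (Set.mem_insert _ _)])
    (fun j h => hne j (by rw [← h, hr β]))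
  exact R.apply_add_ne_of_isSlice_insert hdegpos hw hslice hS hi (R.simple_mem_posRoots i)
    (by rw [sub_add_cancel, hr β])

lemma exists_mem_weylGroup_inversions_eq (hdegpos : ∀ α ∈ R.posRoots, deg α = 0 ∨ deg α = 1)
    {S : Set (ι →₀ ℚ)} (hfin : S.Finite) (hpos : S ⊆ R.posRoots) (hS : ∀ α ∈ S, deg α = 1)
    (hc : R.IsClosedUnderSubDegZero deg S) : ∃ w ∈ R.weylGroup, R.inversions w = S := by
  classical
  obtain ⟨F, rfl⟩ := hfin.exists_finset_coe
  revert hpos hS hc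
  refine Finset.induction_on_max_value Finsupp.degree F
    (fun _ _ _ => ⟨1, one_mem _, by simp [inversions_one]⟩) fun a s ha hmax ih hpos hS hc => ?_
  rw [Finset.coe_insert] at hpos hS hc ⊢
  have hc' : R.IsClosedUnderSubDegZero deg s := fun α hα θ hθ hαθ => by
    refine (hc α (Set.mem_insert_of_mem _ hα) θ hθ hαθ).resolve_left fun h => ?_
    have := R.degree_pos_of_mem_posRoots hθ.1
    have := hmax α hα
    rw [← h, map_sub] at this
    linarith
  obtain ⟨w, hw, hws⟩ := ih (fun x hx => hpos (Set.mem_insert_of_mem _ hx))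
    (fun x hx => hS x (Set.mem_insert_of_mem _ hx)) hc'
  rw [← hws] at hpos hS hc ⊢
  obtain ⟨j, hj⟩ := R.exists_apply_simple_eq_of_isSlice_insert hdegpos hw
    (by rwa [hws, Finset.mem_coe]) (hpos (Set.mem_insert _ _))
    (hws ▸ s.finite_toSet) hS
    (R.isSlice_of_isClosedUnderSubDegZero hdegpos hS hc)
  refine ⟨w * R.reflection (simple j), mul_mem hw (R.reflection_simple_mem_weylGroup j), ?_⟩
  rw [R.inversions_mul_reflection_simple (hj ▸ hpos (Set.mem_insert _ _)), hj]

end Realization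

theorem isSlice_xReduced_iff (deg : (ι →₀ ℚ) →ₗ[ℚ] ℚ)
    (hdegpos : ∀ α ∈ R.posRoots, deg α = 0 ∨ deg α = 1)
    (hdeg0 : ∀ α ∈ R.Δ, deg α = 0 → ↑α.support ⊆ {i : ι | deg (simple i) = 0})
    (S : Set (ι →₀ ℚ)) (hfin : S.Finite) (hpos : S ⊆ R.posRoots) :
    ((R.IsSlice S ∧ S ∩ {α ∈ R.posRoots | deg α = 0} = ∅) ↔
      (S ∩ {α ∈ R.posRoots | deg α = 0} = ∅ ∧
        ∀ α ∈ S, ∀ β ∈ {α ∈ R.posRoots | deg α = 0}, α - β ∈ R.Δ → α - β ∈ S)) ∧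
    ((∃ w ∈ R.weylGroup,
        R.IsXReduced {i : ι | deg (simple i) = 0} w ∧ S = R.inversions w) ↔
      (S ∩ {α ∈ R.posRoots | deg α = 0} = ∅ ∧
        ∀ α ∈ S, ∀ β ∈ {α ∈ R.posRoots | deg α = 0}, α - β ∈ R.Δ → α - β ∈ S)) := by
  have hS := R.deg_eq_one_of_inter_eq_empty hdegpos hpos
  refine ⟨⟨fun ⟨hslice, h0⟩ => ⟨h0, R.isClosedUnderSubDegZero_of_isSlice hdegpos (hS h0) hslice⟩,
    fun ⟨h0, hc⟩ => ⟨R.isSlice_of_isClosedUnderSubDegZero hdegpos (hS h0) hc, h0⟩⟩, ⟨?_, ?_⟩⟩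
  · rintro ⟨w, hw, hX, rfl⟩
    exact ⟨R.inter_eq_empty_of_isXReduced hdeg0 hX,
      R.isClosedUnderSubDegZero_inversions hdegpos hdeg0 hw hX⟩
  · rintro ⟨h0, hc⟩
    obtain ⟨w, hw, hwS⟩ := R.exists_mem_weylGroup_inversions_eq hdegpos hfin hpos (hS h0) hc
    exact ⟨w, hw, R.isXReduced_of_inter_eq_empty (hwS ▸ h0), hwS.symm⟩

end SimpleRootSystem
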